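/- Crossing-sequence composition for space-bounded machines: let T be a deterministic Turing machine with read-only input tape and work tape, and suppose the input x of length n is split into K consecutive blocks. For block j, define the block-transition function T_j : C × {L, R} × S → C × {L, R, accept, reject} × S mapping (work-tape configuration, side from which the input head enters block j, control state) to the outcome when the computation next leaves block j (or halts inside it). Then the acceptance of x by T is determined by iterated composition of the functions T_1, …, T_K (with entry sides flipped appropriately: exiting block j on the right means entering block j+1 on the left, and vice versa), starting from the initial configuration with the input head at the left end of block 1. -/

import Mathlib

open Classical

abbrev Lang := Set (List Bool)

inductive Move | left | right | stay

/-- A deterministic Turing machine with a two-way read-only input tape and a work tape. -/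
structure TM where
  states : ℕ
  start : Fin states
  accept : Fin states
  reject : Fin states
  δ : Fin states → Option Bool → Option Bool → Fin states × Option Bool × Move × Move

namespace TM

structure Cfg (M : TM) where
  q : Fin M.states
  ipos : ℤ
  wtape : ℤ → Option Bool
  wpos : ℤ

def inputSym (x : List Bool) (i : ℤ) : Option Bool :=
  if 0 ≤ i ∧ i < x.length then some (x.getD i.toNat false) else none

def applyMove (p : ℤ) : Move → ℤ
  | .left => p - 1
  | .right => p + 1
  | .stay => p

def step (M : TM) (x : List Bool) (c : Cfg M) : Cfg M :=
  if c.q = M.accept ∨ c.q = M.reject then c else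
  let t := M.δ c.q (inputSym x c.ipos) (c.wtape c.wpos)
  { q := t.1
    ipos := applyMove c.ipos t.2.2.1
    wtape := Function.update c.wtape c.wpos t.2.1
    wpos := applyMove c.wpos t.2.2.2 }

def init (M : TM) : Cfg M := ⟨M.start, 0, fun _ => none, 0⟩

/-- The configuration after `t` steps on input `x`. -/
def run (M : TM) (x : List Bool) (t : ℕ) : Cfg M := (M.step x)^[t] (init M)

def Halted (M : TM) (c : Cfg M) : Prop := c.q = M.accept ∨ c.q = M.reject

/-- `M` decides `L` within time bound `T`. -/
def DecidesInTime (M : TM) (L : Lang) (T : ℕ → ℝ) : Prop :=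
  ∀ x : List Bool, ∃ t : ℕ, (t : ℝ) ≤ T x.length ∧
    Halted M (run M x t) ∧ ((run M x t).q = M.accept ↔ x ∈ L)

/-- `M` decides `L` within time `T` and work-tape space `S`. -/
def DecidesInTimeSpace (M : TM) (L : Lang) (T S : ℕ → ℝ) : Prop :=
  ∀ x : List Bool, ∃ t : ℕ, (t : ℝ) ≤ T x.length ∧
    (∀ t' ≤ t, ((|(run M x t').wpos| : ℤ) : ℝ) ≤ S x.length) ∧
    Halted M (run M x t) ∧ ((run M x t).q = M.accept ↔ x ∈ L)

/-- `M` decides `L` within work-tape space `S` (no time bound). -/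
def DecidesInSpace (M : TM) (L : Lang) (S : ℕ → ℝ) : Prop :=
  ∀ x : List Bool, ∃ t : ℕ,
    (∀ t' ≤ t, ((|(run M x t').wpos| : ℤ) : ℝ) ≤ S x.length) ∧
    Halted M (run M x t) ∧ ((run M x t).q = M.accept ↔ x ∈ L)

end TM

/-- Languages decidable in deterministic time `O(T(n))`. -/
def TIMEc (T : ℕ → ℝ) : Set Lang :=
  { L | ∃ (M : TM) (C : ℕ), 0 < C ∧ M.DecidesInTime L (fun n => C * T n + C) }

/-- Languages decidable in simultaneous deterministic time `O(T(n))` and space `O(S(n))`. -/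
def TISPc (T S : ℕ → ℝ) : Set Lang :=
  { L | ∃ (M : TM) (C : ℕ), 0 < C ∧
      M.DecidesInTimeSpace L (fun n => C * T n + C) (fun n => C * S n + C) }

/-- Languages decidable in deterministic space `O(S(n))`. -/
def SPACEc (S : ℕ → ℝ) : Set Lang :=
  { L | ∃ (M : TM) (C : ℕ), 0 < C ∧ M.DecidesInSpace L (fun n => C * S n + C) }

namespace TM

/-- The output of a halted machine: the contents of work-tape cells `0, 1, …`
up to the first blank cell. -/
noncomputable def outLen (M : TM) (c : Cfg M) : ℕ :=
  if h : ∃ k : ℕ, c.wtape k = none then Nat.find h else 0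

noncomputable def output (M : TM) (c : Cfg M) : List Bool :=
  (List.range (outLen M c)).map (fun i => (c.wtape i).getD false)

/-- On the specific input `inp`, `M` halts accepting within time `T` and space `S`,
with `out` written on its work tape. -/
noncomputable def RunsTo (M : TM) (inp out : List Bool) (T S : ℝ) : Prop :=
  ∃ t : ℕ, (t : ℝ) ≤ T ∧ (∀ t' ≤ t, ((|(run M inp t').wpos| : ℤ) : ℝ) ≤ S) ∧
    (run M inp t).q = M.accept ∧ output M (run M inp t) = out

end TM

/-! ### Crossing-sequence composition for space-bounded machines -/

/-- A work-tape configuration: work-tape contents and work-head position. -/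
abbrev WC := (ℤ → Option Bool) × ℤ

/-- The possible outcomes of running the machine inside an input block: the input head
exits to the left, exits to the right, or the machine accepts or rejects inside. -/
inductive BlockOut | exitL | exitR | acc | rej

/-- The input-head position at which a computation enters block `j` (of length `B`):
its left end when entering from the left (`side = true`), its right end otherwise. -/
def entryPos (B j : ℕ) (side : Bool) : ℤ :=
  if side then (j * B : ℤ) else ((j * B + B : ℤ) - 1)

/-- `Tj` is the block-transition function of block `j`: started in work configuration
`w` and control state `q` with the input head at the appropriate end of block `j`, the
machine runs (staying inside the block and unhalted in between) until it either halts
or the input head first leaves the block, and `Tj` records the resulting work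
configuration, outcome and control state. -/
def BlockSpec (M : TM) (x : List Bool) (B j : ℕ)
    (Tj : WC × Bool × Fin M.states → WC × BlockOut × Fin M.states) : Prop :=
  ∀ (w : WC) (side : Bool) (q : Fin M.states),
    ∃ t : ℕ,
      (∀ t', 0 < t' → t' < t →
        ((M.step x)^[t'] ⟨q, entryPos B j side, w.1, w.2⟩).ipos ∈
          Set.Ico (j * B : ℤ) (j * B + B : ℤ) ∧
        ¬ M.Halted ((M.step x)^[t'] ⟨q, entryPos B j side, w.1, w.2⟩)) ∧
      (∀ ct : TM.Cfg M, ct = (M.step x)^[t] ⟨q, entryPos B j side, w.1, w.2⟩ →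
        (ct.q = M.accept ∧ Tj (w, side, q) = ((ct.wtape, ct.wpos), .acc, ct.q)) ∨
        (ct.q = M.reject ∧ ct.q ≠ M.accept ∧
          Tj (w, side, q) = ((ct.wtape, ct.wpos), .rej, ct.q)) ∨
        (¬ M.Halted ct ∧ ct.ipos = (j * B : ℤ) - 1 ∧
          Tj (w, side, q) = ((ct.wtape, ct.wpos), .exitL, ct.q)) ∨
        (¬ M.Halted ct ∧ ct.ipos = (j * B + B : ℤ) ∧
          Tj (w, side, q) = ((ct.wtape, ct.wpos), .exitR, ct.q)))

/-- One block-level step of the composed computation: apply the block-transition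
function of the current block; exiting block `j` on the left means entering block
`j - 1` from the right, and exiting on the right means entering block `j + 1` from
the left. -/
def bstep (M : TM)
    (Tfam : ℕ → WC × Bool × Fin M.states → WC × BlockOut × Fin M.states)
    (st : (ℕ × Bool × WC × Fin M.states) ⊕ Bool) :
    (ℕ × Bool × WC × Fin M.states) ⊕ Bool :=
  match st with
  | .inr b => .inr b
  | .inl (j, side, w, q) =>
    match Tfam j (w, side, q) with
    | (_, .acc, _) => .inr true
    | (_, .rej, _) => .inr false
    | (w', .exitL, q') => .inl (j - 1, false, w', q')
    | (w', .exitR, q') => .inl (j + 1, true, w', q')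

/-- `M` accepts `x`. -/
def TM.Accepts (M : TM) (x : List Bool) : Prop := ∃ t : ℕ, (TM.run M x t).q = M.accept

/-!
The block-level computation driven by `bstep` shadows the real run: each block-level state is
matched (`Represents`) by the configuration of the run at some time, and one `bstep` advances
that time strictly. Indeed, by `BlockSpec` a block step is a stretch of the real computation that
ends in a halt or with the input head just outside the block, which is exactly the entry position
of the neighbouring block; the stretch is nonempty because entry positions lie inside the block,
and the head bound keeps the block index in `[0, K)`. Since halted configurations are fixed
points, a run that accepts at time `t` is still accepting at the matched time `N ≥ t`, where the
block-level state is the acceptance verdict or yields it in one more step.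
-/

theorem TM.step_of_halted {M : TM} (x : List Bool) {c : TM.Cfg M} (h : M.Halted c) :
    M.step x c = c :=
  if_pos h

theorem TM.run_add (M : TM) (x : List Bool) (N t : ℕ) :
    M.run x (N + t) = (M.step x)^[t] (M.run x N) := by
  rw [TM.run, TM.run, Nat.add_comm, Function.iterate_add_apply]

theorem TM.run_eq_of_halted {M : TM} {x : List Bool} {N N' : ℕ} (h : M.Halted (M.run x N))
    (hle : N ≤ N') : M.run x N' = M.run x N := by
  obtain ⟨t, rfl⟩ := Nat.exists_eq_add_of_le hle
  rw [TM.run_add, Function.iterate_fixed (TM.step_of_halted x h)]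

theorem entryPos_mem_Ico {B : ℕ} (hB : 0 < B) (j : ℕ) (side : Bool) :
    entryPos B j side ∈ Set.Ico (j * B : ℤ) (j * B + B) := by
  cases side <;> simp only [entryPos, Set.mem_Ico] <;> omega

theorem entryPos_pred_false (B : ℕ) {j : ℕ} (hj : 1 ≤ j) :
    entryPos B (j - 1) false = j * B - 1 := by
  simp only [entryPos, Bool.false_eq_true, if_false]
  push_cast [hj]
  ring

theorem one_le_of_mul_sub_one_nonneg {j B : ℕ} (h : 0 ≤ (j * B : ℤ) - 1) : 1 ≤ j :=
  Nat.one_le_iff_ne_zero.2 (by rintro rfl; simp at h)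

theorem succ_lt_of_mul_add_lt {j B K : ℕ} (h : (j * B + B : ℤ) < K * B) : j + 1 < K := by
  have h' : ((j + 1 : ℕ) : ℤ) * B < K * B := by push_cast; linarith
  exact_mod_cast lt_of_mul_lt_mul_right h' (Int.natCast_nonneg B)

theorem entryPos_succ_true (B j : ℕ) : entryPos B (j + 1) true = j * B + B := by
  simp only [entryPos, if_true]
  push_cast
  ring

/-- The block-level state `st` describes the configuration `c`: either `c` is the configuration
in which the machine enters the input block recorded in `st`, or `c` has reached the verdict
recorded in `st`. -/
def Represents (M : TM) (B K : ℕ) (c : TM.Cfg M) :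
    (ℕ × Bool × WC × Fin M.states) ⊕ Bool → Prop
  | .inl (j, side, w, q) => j < K ∧ c = ⟨q, entryPos B j side, w.1, w.2⟩
  | .inr true => c.q = M.accept
  | .inr false => c.q = M.reject ∧ c.q ≠ M.accept

section BlockStep

variable {M : TM} {x : List Bool} {B K : ℕ}
  {Tfam : ℕ → WC × Bool × Fin M.states → WC × BlockOut × Fin M.states}

theorem represents_run_zero (hK : 0 < K) :
    Represents M B K (M.run x 0) (.inl (0, true, (fun _ => none, 0), M.start)) :=
  ⟨hK, by simp [TM.run, TM.init, entryPos]⟩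

theorem bstep_inl_of_accept {j : ℕ} {side : Bool} {w : WC}
    (hT : BlockSpec M x B j (Tfam j)) :
    bstep M Tfam (.inl (j, side, w, M.accept)) = .inr true := by
  obtain ⟨t, -, hct⟩ := hT w side M.accept
  have hhalt : M.Halted ⟨M.accept, entryPos B j side, w.1, w.2⟩ := Or.inl rfl
  rcases hct _ (Function.iterate_fixed (TM.step_of_halted x hhalt) t).symm with
    ⟨-, hTj⟩ | ⟨-, hne, -⟩ | ⟨hnh, -⟩ | ⟨hnh, -⟩
  · simp only [bstep, hTj]
  · exact absurd rfl hne
  · exact absurd hhalt hnh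
  · exact absurd hhalt hnh

theorem bstep_eq_inr_true_of_represents {c : TM.Cfg M} {st}
    (hT : ∀ j < K, BlockSpec M x B j (Tfam j)) (hst : Represents M B K c st)
    (hacc : c.q = M.accept) :
    bstep M Tfam st = .inr true := by
  rcases st with ⟨j, side, w, q⟩ | _ | _
  · obtain ⟨hj, rfl⟩ := hst
    obtain rfl : q = M.accept := hacc
    exact bstep_inl_of_accept (hT j hj)
  · exact absurd hacc hst.2
  · rfl

theorem exists_represents_bstep_inl (hB : 0 < B)
    (hhead : ∀ t, 0 ≤ (M.run x t).ipos ∧ (M.run x t).ipos < K * B)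
    {N j : ℕ} {side : Bool} {w : WC} {q : Fin M.states}
    (hjK : j < K) (hT : BlockSpec M x B j (Tfam j))
    (hN : M.run x N = ⟨q, entryPos B j side, w.1, w.2⟩) :
    ∃ N', N < N' ∧ Represents M B K (M.run x N') (bstep M Tfam (.inl (j, side, w, q))) := by
  obtain ⟨t, -, hct⟩ := hT w side q
  have hrun : M.run x (N + t) = (M.step x)^[t] ⟨q, entryPos B j side, w.1, w.2⟩ := by
    rw [TM.run_add, hN]
  -- an exit position lies outside the block, while the entry position lies inside it
  have hprogress : (M.run x (N + t)).ipos ∉ Set.Ico (j * B : ℤ) (j * B + B) → N < N + t := by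
    intro hout
    refine Nat.lt_add_of_pos_right (Nat.pos_of_ne_zero ?_)
    rintro rfl
    exact hout (hN ▸ entryPos_mem_Ico hB j side)
  rcases hct _ hrun with ⟨hacc, hTj⟩ | ⟨hrej, hne, hTj⟩ | ⟨-, hpos, hTj⟩ | ⟨-, hpos, hTj⟩
  · refine ⟨N + t + 1, by omega, ?_⟩
    simp only [bstep, hTj, Represents]
    rwa [TM.run_eq_of_halted (Or.inl hacc) (Nat.le_succ _)]
  · refine ⟨N + t + 1, by omega, ?_⟩
    simp only [bstep, hTj, Represents]
    rw [TM.run_eq_of_halted (Or.inr hrej) (Nat.le_succ _)]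
    exact ⟨hrej, hne⟩
  · have hj : 1 ≤ j := one_le_of_mul_sub_one_nonneg (hpos ▸ (hhead (N + t)).1)
    refine ⟨N + t, hprogress (by simp [hpos]), ?_⟩
    simp only [bstep, hTj, Represents]
    exact ⟨by omega, by rw [entryPos_pred_false B hj, ← hpos]⟩
  · have hj : j + 1 < K := succ_lt_of_mul_add_lt (hpos ▸ (hhead (N + t)).2)
    refine ⟨N + t, hprogress (by simp [hpos]), ?_⟩
    simp only [bstep, hTj, Represents]
    exact ⟨hj, by rw [entryPos_succ_true, ← hpos]⟩

theorem exists_represents_bstep (hB : 0 < B)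
    (hhead : ∀ t, 0 ≤ (M.run x t).ipos ∧ (M.run x t).ipos < K * B)
    (hT : ∀ j < K, BlockSpec M x B j (Tfam j)) {N : ℕ} {st}
    (hst : Represents M B K (M.run x N) st) :
    ∃ N', N < N' ∧ Represents M B K (M.run x N') (bstep M Tfam st) := by
  rcases st with ⟨j, side, w, q⟩ | verdict
  · exact exists_represents_bstep_inl hB hhead hst.1 (hT j hst.1) hst.2
  · have hhalt : M.Halted (M.run x N) := by
      cases verdict
      exacts [Or.inr hst.1, Or.inl hst]
    exact ⟨N + 1, N.lt_succ_self, by rwa [TM.run_eq_of_halted hhalt (Nat.le_succ N)]⟩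

theorem exists_represents_iterate_bstep (hB : 0 < B)
    (hhead : ∀ t, 0 ≤ (M.run x t).ipos ∧ (M.run x t).ipos < K * B)
    (hT : ∀ j < K, BlockSpec M x B j (Tfam j)) {N : ℕ} {st}
    (hst : Represents M B K (M.run x N) st) (m : ℕ) :
    ∃ N', N + m ≤ N' ∧ Represents M B K (M.run x N') ((bstep M Tfam)^[m] st) := by
  induction m with
  | zero => exact ⟨N, le_rfl, hst⟩
  | succ m ih =>
    obtain ⟨N₁, hN₁, h₁⟩ := ih
    obtain ⟨N₂, hN₂, h₂⟩ := exists_represents_bstep hB hhead hT h₁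
    exact ⟨N₂, by omega, by rwa [Function.iterate_succ_apply']⟩

end BlockStep

theorem crossing_sequence_composition_general (M : TM) (x : List Bool) (B K : ℕ)
    (hx : x.length = K * B)
    (hhead : ∀ t : ℕ, 0 ≤ (TM.run M x t).ipos ∧ (TM.run M x t).ipos < (x.length : ℤ))
    (Tfam : ℕ → WC × Bool × Fin M.states → WC × BlockOut × Fin M.states)
    (hT : ∀ j < K, BlockSpec M x B j (Tfam j)) :
    M.Accepts x ↔
      ∃ m : ℕ, (bstep M Tfam)^[m]
        (.inl (0, true, (fun _ => none, 0), M.start)) = .inr true := by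
  simp only [hx, Nat.cast_mul] at hhead
  have hKB : 0 < K * B := by exact_mod_cast (hhead 0).1.trans_lt (hhead 0).2
  have hB : 0 < B := Nat.pos_of_mul_pos_left hKB
  have hK : 0 < K := Nat.pos_of_mul_pos_right hKB
  have hsim := exists_represents_iterate_bstep hB hhead hT (represents_run_zero hK)
  constructor
  · rintro ⟨t, hacc⟩
    obtain ⟨N, hle, hN⟩ := hsim t
    rw [zero_add] at hle
    rw [TM.run_eq_of_halted (Or.inl hacc) hle] at hN
    refine ⟨t + 1, ?_⟩
    rw [Function.iterate_succ_apply', bstep_eq_inr_true_of_represents hT hN hacc]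
  · rintro ⟨m, hm⟩
    obtain ⟨N, -, hN⟩ := hsim m
    rw [hm] at hN
    exact ⟨N, hN⟩

/-- Crossing-sequence composition: if the input of length `K·B` is split into `K`
consecutive blocks of length `B`, and for each block `j` the function `Tfam j`
satisfies the block-transition specification, then acceptance of `x` by `M` is
determined by iterated composition of the block-transition functions (with entry
sides flipped appropriately), starting from the initial configuration with the input
head at the left end of block `0`. -/
theorem crossing_sequence_composition (M : TM) (x : List Bool) (B K : ℕ)
    (hB : 0 < B) (hK : 0 < K) (hx : x.length = K * B)
    (hhead : ∀ t : ℕ, 0 ≤ (TM.run M x t).ipos ∧ (TM.run M x t).ipos < (x.length : ℤ))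
    (Tfam : ℕ → WC × Bool × Fin M.states → WC × BlockOut × Fin M.states)
    (hT : ∀ j < K, BlockSpec M x B j (Tfam j)) :
    M.Accepts x ↔
      ∃ m : ℕ, (bstep M Tfam)^[m]
        (.inl (0, true, (fun _ => none, 0), M.start)) = .inr true :=
  crossing_sequence_composition_general M x B K hx hhead Tfam hT
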